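/- arXiv:2509.05767 — 9 statements merged into one kernel-verified Lean document; each statement's English description precedes it below -/
import Mathlib

section
/- Let R be a commutative noetherian ring and f : M → N a homomorphism of finitely generated R-modules. Then f is a split monomorphism if and only if the localization f_𝔪 : M_𝔪 → N_𝔪 is a split monomorphism for every maximal ideal 𝔪 of R. -/
/-- Let `R` be a commutative noetherian ring and `f : M → N` a homomorphism of finitely
generated `R`-modules.  Then `f` is a split monomorphism if and only if the localization
`f_𝔪 : M_𝔪 → N_𝔪` is a split monomorphism for every maximal ideal `𝔪` of `R`. -/
theorem split_mono_iff_localization_split_mono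
    (R : Type) [CommRing R] [IsNoetherianRing R]
    (M N : Type) [AddCommGroup M] [Module R M] [AddCommGroup N] [Module R N]
    [Module.Finite R M] [Module.Finite R N] (f : M →ₗ[R] N) :
    (∃ g : N →ₗ[R] M, g ∘ₗ f = LinearMap.id) ↔
      (∀ (m : Ideal R) (_ : m.IsMaximal),
        ∃ g : LocalizedModule m.primeCompl N →ₗ[Localization.AtPrime m]
              LocalizedModule m.primeCompl M,
          (LinearMap.restrictScalars R g) ∘ₗ
              (IsLocalizedModule.map m.primeCompl
                (LocalizedModule.mkLinearMap m.primeCompl M)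
                (LocalizedModule.mkLinearMap m.primeCompl N) f) = LinearMap.id) := by
  have hMfp : Module.FinitePresentation R M := Module.finitePresentation_of_finite R M
  have hNfp : Module.FinitePresentation R N := Module.finitePresentation_of_finite R N
  constructor
  · rintro ⟨g, hg⟩ m hm
    refine ⟨IsLocalizedModule.mapExtendScalars m.primeCompl
      (LocalizedModule.mkLinearMap m.primeCompl N)
      (LocalizedModule.mkLinearMap m.primeCompl M) (Localization.AtPrime m) g, ?_⟩
    have h1 : LinearMap.restrictScalars R (IsLocalizedModule.mapExtendScalars m.primeCompl
        (LocalizedModule.mkLinearMap m.primeCompl N)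
        (LocalizedModule.mkLinearMap m.primeCompl M) (Localization.AtPrime m) g) =
        IsLocalizedModule.map m.primeCompl
        (LocalizedModule.mkLinearMap m.primeCompl N)
        (LocalizedModule.mkLinearMap m.primeCompl M) g := rfl
    rw [h1, ← IsLocalizedModule.map_comp' m.primeCompl
      (LocalizedModule.mkLinearMap m.primeCompl M)
      (LocalizedModule.mkLinearMap m.primeCompl N)
      (LocalizedModule.mkLinearMap m.primeCompl M) f g, hg,
      IsLocalizedModule.map_id]
  · intro H
    have hmem : LinearMap.id ∈ LinearMap.range (f.lcomp R M) := by
      apply Submodule.mem_of_localization_maximal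
        (Mₚ := fun P _ ↦ (LocalizedModule P.primeCompl M →ₗ[Localization.AtPrime P]
          LocalizedModule P.primeCompl M))
        (f := fun P _ ↦ IsLocalizedModule.mapExtendScalars P.primeCompl
          (LocalizedModule.mkLinearMap P.primeCompl M)
          (LocalizedModule.mkLinearMap P.primeCompl M) (Localization.AtPrime P))
      intro P hP
      set L₁ := IsLocalizedModule.mapExtendScalars P.primeCompl
        (LocalizedModule.mkLinearMap P.primeCompl N)
        (LocalizedModule.mkLinearMap P.primeCompl M) (Localization.AtPrime P)
      set L₂ := IsLocalizedModule.mapExtendScalars P.primeCompl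
        (LocalizedModule.mkLinearMap P.primeCompl M)
        (LocalizedModule.mkLinearMap P.primeCompl M) (Localization.AtPrime P)
      obtain ⟨g', hg'⟩ := H P hP
      obtain ⟨⟨g, s⟩, hgs⟩ := IsLocalizedModule.mk'_surjective P.primeCompl L₁ g'
      simp only [Function.uncurry_apply_pair] at hgs
      refine ⟨g ∘ₗ f, ⟨g, rfl⟩, s, ?_⟩
      have hcancel : s • IsLocalizedModule.mk' L₁ g s = L₁ g :=
        IsLocalizedModule.mk'_cancel' L₁ g s
      rw [hgs] at hcancel
      -- key : L₂ (g ∘ₗ f) = s • L₂ LinearMap.id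
      have key : L₂ (g ∘ₗ f) = s • (L₂ LinearMap.id) := by
        apply LinearMap.restrictScalars_injective R
        have h2 : LinearMap.restrictScalars R (L₂ (g ∘ₗ f)) =
            IsLocalizedModule.map P.primeCompl
            (LocalizedModule.mkLinearMap P.primeCompl M)
            (LocalizedModule.mkLinearMap P.primeCompl M) (g ∘ₗ f) := rfl
        have h3 : LinearMap.restrictScalars R (L₁ g) =
            IsLocalizedModule.map P.primeCompl
            (LocalizedModule.mkLinearMap P.primeCompl N)
            (LocalizedModule.mkLinearMap P.primeCompl M) g := rfl
        rw [h2, IsLocalizedModule.map_comp' P.primeCompl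
          (LocalizedModule.mkLinearMap P.primeCompl M)
          (LocalizedModule.mkLinearMap P.primeCompl N)
          (LocalizedModule.mkLinearMap P.primeCompl M) f g, ← h3, ← hcancel]
        ext x
        have := LinearMap.congr_fun hg' x
        simp only [LinearMap.coe_comp, Function.comp_apply, LinearMap.coe_restrictScalars,
          LinearMap.smul_apply, LinearMap.id_coe, id_eq] at this ⊢
        rw [this]
        have h4 : L₂ LinearMap.id = LinearMap.id := by
          apply LinearMap.restrictScalars_injective R
          exact IsLocalizedModule.map_id P.primeCompl (LocalizedModule.mkLinearMap P.primeCompl M)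
        rw [h4]
        simp
      have hinj : Function.Injective (fun x : LocalizedModule P.primeCompl M →ₗ[Localization.AtPrime P]
          LocalizedModule P.primeCompl M ↦ s • x) := by
        have := (Module.End.isUnit_iff _).mp (IsLocalizedModule.map_units L₂ s)
        exact fun a b hab ↦ this.1 (by simpa [Module.algebraMap_end_apply, Submonoid.smul_def] using hab)
      apply hinj
      simp only
      rw [IsLocalizedModule.mk'_cancel' L₂ (g ∘ₗ f) s, key]
    obtain ⟨g, hg⟩ := hmem
    exact ⟨g, hg⟩
end

section
/- Let R be a commutative ring, M and N R-modules, and suppose there is a surjection M^⊕n ↠ N for some n ≥ 1. Then the composite Z(End_R(M ⊕ N)) ↪ Z(End_R(M)) × Z(End_R(N)) ↠ Z(End_R(M)) is injective. -/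
/-!
A central endomorphism `f` of `M × N` commutes with the projection onto `M`, so it is diagonal,
`f = f_M × f_N`; commuting with the maps `M → M × N → N → M × N` built from any `c : M →ₗ N`
gives `f_N ∘ c = c ∘ f_M`. Hence `f_M = 0` forces `f_N` to vanish on the image of every map
`M → N`, and these images span `N` because `N` is a quotient of a finite power of `M`.
-/

open LinearMap

namespace Module.End

variable {R M N : Type*} [CommSemiring R] [AddCommMonoid M] [Module R M]
  [AddCommMonoid N] [Module R N] {f : Module.End R (M × N)}

theorem comp_inl_of_mem_center (hf : f ∈ Subalgebra.center R (Module.End R (M × N))) :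
    f ∘ₗ inl R M N = inl R M N ∘ₗ (fst R M N ∘ₗ f ∘ₗ inl R M N) := by
  ext m : 1
  simpa [Module.End.mul_apply] using
    LinearMap.congr_fun (Subalgebra.mem_center_iff.mp hf (inl R M N ∘ₗ fst R M N)) (m, 0) |>.symm

theorem comp_inr_of_mem_center (hf : f ∈ Subalgebra.center R (Module.End R (M × N))) :
    f ∘ₗ inr R M N = inr R M N ∘ₗ (snd R M N ∘ₗ f ∘ₗ inr R M N) := by
  ext y : 1
  simpa [Module.End.mul_apply] using
    LinearMap.congr_fun (Subalgebra.mem_center_iff.mp hf (inr R M N ∘ₗ snd R M N)) (0, y) |>.symm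

theorem snd_comp_comp_inr_comp_of_mem_center
    (hf : f ∈ Subalgebra.center R (Module.End R (M × N))) (c : M →ₗ[R] N) :
    (snd R M N ∘ₗ f ∘ₗ inr R M N) ∘ₗ c = c ∘ₗ (fst R M N ∘ₗ f ∘ₗ inl R M N) := by
  ext m
  have hcomm := LinearMap.congr_fun
    (Subalgebra.mem_center_iff.mp hf (inr R M N ∘ₗ c ∘ₗ fst R M N)) (m, 0)
  simpa [Module.End.mul_apply] using congr_arg Prod.snd hcomm.symm

end Module.End

theorem LinearMap.eq_zero_of_comp_eq_zero_of_surjective {R M N P ι : Type*} [Semiring R]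
    [AddCommMonoid M] [Module R M] [AddCommMonoid N] [Module R N] [AddCommMonoid P] [Module R P]
    [Finite ι] [DecidableEq ι] {g : N →ₗ[R] P} (hg : ∀ c : M →ₗ[R] N, g ∘ₗ c = 0)
    {π : (ι → M) →ₗ[R] N} (hπ : Function.Surjective π) : g = 0 := by
  refine (cancel_right hπ).mp (pi_ext' fun i => ?_)
  rw [comp_assoc, hg, zero_comp, zero_comp]

theorem center_end_prod_proj_injective_general
    (R : Type) [CommRing R]
    (M N : Type) [AddCommGroup M] [Module R M] [AddCommGroup N] [Module R N]
    (n : ℕ) (π : (Fin n → M) →ₗ[R] N) (hπ : Function.Surjective π) :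
    ∀ f ∈ Subalgebra.center R (Module.End R (M × N)),
      (LinearMap.fst R M N) ∘ₗ f ∘ₗ (LinearMap.inl R M N) = 0 → f = 0 := by
  intro f hf hM
  have hN : snd R M N ∘ₗ f ∘ₗ inr R M N = 0 :=
    eq_zero_of_comp_eq_zero_of_surjective (fun c => by
      rw [Module.End.snd_comp_comp_inr_comp_of_mem_center hf, hM, comp_zero]) hπ
  apply LinearMap.prod_ext
  · rw [Module.End.comp_inl_of_mem_center hf, hM, comp_zero, zero_comp]
  · rw [Module.End.comp_inr_of_mem_center hf, hN, comp_zero, zero_comp]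

/-- Let `R` be a commutative ring, `M` and `N` `R`-modules, and suppose there is a
surjection `M^⊕n ↠ N` for some `n ≥ 1`.  Then the composite
`Z(End_R(M ⊕ N)) ↪ Z(End_R M) × Z(End_R N) ↠ Z(End_R M)` is injective; equivalently,
a central endomorphism of `M ⊕ N` whose `M`-component vanishes is zero. -/
theorem center_end_prod_proj_injective
    (R : Type) [CommRing R]
    (M N : Type) [AddCommGroup M] [Module R M] [AddCommGroup N] [Module R N]
    (n : ℕ) (hn : 1 ≤ n) (π : (Fin n → M) →ₗ[R] N) (hπ : Function.Surjective π) :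
    ∀ f ∈ Subalgebra.center R (Module.End R (M × N)),
      (LinearMap.fst R M N) ∘ₗ f ∘ₗ (LinearMap.inl R M N) = 0 → f = 0 :=
  center_end_prod_proj_injective_general R M N n π hπ
end

section
/- Let R be a commutative ring, M an R-module, and F a nonzero finitely generated free R-module. Then the natural R-algebra homomorphism R → Z(End_R(F ⊕ M)) sending r to multiplication by r is an isomorphism. -/
/-- Let `R` be a commutative ring, `M` an `R`-module, and `F` a nonzero finitely
generated free `R`-module.  Then the natural `R`-algebra homomorphism
`R → Z(End_R(F ⊕ M))`, sending `r` to multiplication by `r`, is an isomorphism. -/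
theorem center_end_free_sum_trivial
    (R : Type) [CommRing R]
    (F M : Type) [AddCommGroup F] [Module R F] [AddCommGroup M] [Module R M]
    [Module.Free R F] [Module.Finite R F] [Nontrivial F] :
    Function.Bijective
      (algebraMap R (Subalgebra.center R (Module.End R (F × M)))) := by
  classical
  set b := Module.Free.chooseBasis R F with hb
  obtain ⟨i⟩ := b.index_nonempty
  constructor
  · intro r s h
    have h1 : r • ((b i, (0 : M))) = s • ((b i, (0 : M))) := by
      have h0 := congrArg Subtype.val h
      have := congrArg (fun φ : Module.End R (F × M) => φ (b i, 0)) h0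
      simpa [Module.algebraMap_end_apply] using this
    have h2 : (r • b i : F) = s • b i := congrArg Prod.fst h1
    have := congrArg (fun v => b.repr v i) h2
    simpa using this
  · rintro ⟨f, hf⟩
    rw [Subalgebra.mem_center_iff] at hf
    refine ⟨b.repr (f (b i, 0)).1 i, ?_⟩
    apply Subtype.ext
    apply LinearMap.ext
    intro x
    set g : Module.End R (F × M) :=
      (LinearMap.toSpanSingleton R (F × M) x).comp
        ((b.coord i).comp (LinearMap.fst R F M))
    have key := congrArg (fun φ : Module.End R (F × M) => φ (b i, 0)) (hf g)
    simp only [Module.End.mul_apply] at key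
    have hg1 : g (b i, 0) = x := by
      simp [g, LinearMap.toSpanSingleton_apply]
    have hg2 : g (f (b i, 0)) = b.repr (f (b i, 0)).1 i • x := by
      simp [g, LinearMap.toSpanSingleton_apply, Module.Basis.coord_apply]
    rw [hg1] at key
    rw [hg2] at key
    simpa [Module.algebraMap_end_apply, Subalgebra.coe_algebraMap] using key
end

section
/- Let (R,𝔪) be a commutative noetherian local ring and M a finitely generated R-module with depth_R M = 0. Then for every f in the center of End_R(M) there exists u ∈ R such that the image of f − u·id_M is contained in 𝔪M. -/
open CategoryTheory

/-- The depth of a module `M` over a noetherian local ring `A`: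
`inf { n | Ext^n_A(A/𝔪, M) ≠ 0 }`, with the convention that the depth of the
zero module is `∞` (the infimum of the empty set). -/
noncomputable def moduleDepth (A : Type) [CommRing A] [IsLocalRing A]
    (M : Type) [AddCommGroup M] [Module A M] : ℕ∞ :=
  sInf {d : ℕ∞ | ∃ n : ℕ, d = n ∧
    Nontrivial (((Ext A (ModuleCat A) n).obj
      (Opposite.op (ModuleCat.of A (IsLocalRing.ResidueField A)))).obj (ModuleCat.of A M))}

/-!
Depth zero means `Hom_R(k, M) ≠ 0` for `k = R/𝔪`, so there is an injective `φ : k → M`.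
A central `f` commutes with every composite `φ ∘ g` for `g : M → k`. Taking `g` with
`g e = 1` for some `e ∉ 𝔪M` shows that `f` acts on `φ(k)` as a scalar `u`, and then
injectivity of `φ` gives `g (f m - u m) = 0` for all `g : M → k`; since such `g` separate
the points of the `k`-vector space `M/𝔪M`, `f m - u m ∈ 𝔪M`. If `M = 𝔪M` there is nothing
to prove.
-/

open IsLocalRing

universe u

open Limits in
instance ModuleCat.preservesLimits_linearYoneda_obj {R : Type u} [CommRing R]
    (Y : ModuleCat.{u} R) : PreservesLimits ((linearYoneda R (ModuleCat.{u} R)).obj Y) :=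
  have : PreservesLimits ((linearYoneda R (ModuleCat R)).obj Y ⋙ forget (ModuleCat R)) :=
    inferInstanceAs (PreservesLimits (yoneda.obj Y))
  ⟨preservesLimitsOfShape_of_reflects_of_preserves _ (forget (ModuleCat R))⟩

noncomputable def ModuleCat.extZeroIso {R : Type u} [CommRing R] (X Y : ModuleCat.{u} R) :
    ((Ext R (ModuleCat.{u} R) 0).obj (Opposite.op X)).obj Y ≅ ModuleCat.of R (X ⟶ Y) :=
  have := Limits.preservesFiniteColimits_rightOp ((linearYoneda R (ModuleCat.{u} R)).obj Y)
  (((linearYoneda R _).obj Y).rightOp.leftDerivedZeroIsoSelf.app X).unop.symm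

theorem nontrivial_hom_residueField_of_moduleDepth_eq_zero (A : Type) [CommRing A]
    [IsLocalRing A] (M : Type) [AddCommGroup M] [Module A M] (h : moduleDepth A M = 0) :
    Nontrivial (ResidueField A →ₗ[A] M) := by
  obtain ⟨n, hn, hext⟩ := ENat.sInf_eq_zero.mp h
  obtain rfl : n = 0 := by exact_mod_cast hn.symm
  exact (ModuleCat.homEquiv.symm.trans (ModuleCat.extZeroIso (ModuleCat.of A (ResidueField A))
    (ModuleCat.of A M)).toLinearEquiv.toEquiv.symm).nontrivial

section

variable {R M : Type*} [CommRing R] [AddCommGroup M] [Module R M]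

theorem Module.End.apply_comp_apply_of_mem_center {N : Type*} [AddCommGroup N] [Module R N]
    {f : Module.End R M} (hf : f ∈ Subalgebra.center R (Module.End R M))
    (φ : N →ₗ[R] M) (g : M →ₗ[R] N) (m : M) : φ (g (f m)) = f (φ (g m)) :=
  LinearMap.congr_fun (Subalgebra.mem_center_iff.mp hf (φ ∘ₗ g)) m

variable {I : Ideal R} [I.IsMaximal]

namespace Ideal

theorem exists_linearMap_quotient_apply_eq_one {m : M} (hm : m ∉ I • (⊤ : Submodule R M)) :
    ∃ g : M →ₗ[R] R ⧸ I, g m = 1 := by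
  let := Quotient.field I
  have hq : Submodule.mkQ (I • ⊤ : Submodule R M) m ≠ 0 := by
    rwa [ne_eq, Submodule.mkQ_apply, Submodule.Quotient.mk_eq_zero]
  obtain ⟨g, hg⟩ := Module.Projective.exists_dual_eq_one (R ⧸ I) hq
  exact ⟨g.restrictScalars R ∘ₗ Submodule.mkQ _, hg⟩

theorem mem_smul_top_of_forall_linearMap_quotient_apply_eq_zero {m : M}
    (h : ∀ g : M →ₗ[R] R ⧸ I, g m = 0) : m ∈ I • (⊤ : Submodule R M) := by
  by_contra hm
  obtain ⟨g, hg⟩ := exists_linearMap_quotient_apply_eq_one hm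
  exact one_ne_zero (hg.symm.trans (h g))

theorem injective_of_linearMap_quotient_ne_zero {φ : R ⧸ I →ₗ[R] M} (hφ : φ ≠ 0) :
    Function.Injective φ :=
  have : IsSimpleModule R (R ⧸ I) := isSimpleModule_iff_isCoatom.mpr IsMaximal.out
  φ.injective_or_eq_zero.resolve_right hφ

theorem exists_range_sub_smul_id_le_smul_top_of_mem_center {φ : R ⧸ I →ₗ[R] M} (hφ : φ ≠ 0)
    {f : Module.End R M} (hf : f ∈ Subalgebra.center R (Module.End R M)) :
    ∃ u : R, LinearMap.range (f - u • LinearMap.id) ≤ I • (⊤ : Submodule R M) := by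
  by_cases htop : I • (⊤ : Submodule R M) = ⊤
  · exact ⟨0, le_top.trans htop.ge⟩
  obtain ⟨e, -, he⟩ := SetLike.exists_of_lt (lt_top_iff_ne_top.mpr htop)
  obtain ⟨g, hg⟩ := exists_linearMap_quotient_apply_eq_one he
  obtain ⟨u, hu⟩ := Quotient.mk_surjective (g (f e))
  have hφ_mk : ∀ r, φ (Quotient.mk I r) = r • φ 1 := fun r => by
    rw [← map_smul, Algebra.smul_def, mul_one, Quotient.algebraMap_eq]
  have hf_one : f (φ 1) = u • φ 1 := by
    rw [← hg, ← Module.End.apply_comp_apply_of_mem_center hf, hg, ← hu, hφ_mk]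
  have hf_φ : ∀ c, f (φ c) = u • φ c := by
    intro c
    obtain ⟨r, rfl⟩ := Quotient.mk_surjective c
    rw [hφ_mk, map_smul, hf_one, smul_comm]
  refine ⟨u, ?_⟩
  rintro _ ⟨m, rfl⟩
  refine mem_smul_top_of_forall_linearMap_quotient_apply_eq_zero fun g' => ?_
  apply injective_of_linearMap_quotient_ne_zero hφ
  simp [Module.End.apply_comp_apply_of_mem_center hf, hf_φ]

end Ideal

end

theorem center_end_depth_zero_approx_scalar_general
    (R : Type) [CommRing R] [IsLocalRing R]
    (M : Type) [AddCommGroup M] [Module R M]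
    (hdepth : moduleDepth R M = 0) :
    ∀ f ∈ Subalgebra.center R (Module.End R M),
      ∃ u : R, LinearMap.range (f - u • (LinearMap.id : Module.End R M)) ≤
        (IsLocalRing.maximalIdeal R) • (⊤ : Submodule R M) := by
  intro f hf
  have := nontrivial_hom_residueField_of_moduleDepth_eq_zero R M hdepth
  obtain ⟨φ, hφ⟩ := exists_ne (0 : ResidueField R →ₗ[R] M)
  exact Ideal.exists_range_sub_smul_id_le_smul_top_of_mem_center hφ hf

/-- Let `(R,𝔪)` be a commutative noetherian local ring and `M` a finitely generated
`R`-module with `depth_R M = 0`.  Then for every `f` in the center of `End_R M` there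
exists `u ∈ R` with `im (f - u·id) ⊆ 𝔪M`. -/
theorem center_end_depth_zero_approx_scalar
    (R : Type) [CommRing R] [IsNoetherianRing R] [IsLocalRing R]
    (M : Type) [AddCommGroup M] [Module R M] [Module.Finite R M]
    (hdepth : moduleDepth R M = 0) :
    ∀ f ∈ Subalgebra.center R (Module.End R M),
      ∃ u : R, LinearMap.range (f - u • (LinearMap.id : Module.End R M)) ≤
        (IsLocalRing.maximalIdeal R) • (⊤ : Submodule R M) :=
  center_end_depth_zero_approx_scalar_general R M hdepth
end

section
/- Let (R,𝔪) be a commutative noetherian local ring and M a finitely generated R-module with depth_R M = 0. Then the center Z(End_R(M)) of the endomorphism ring of M is a local ring. -/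
open CategoryTheory

/-!
Depth zero provides a nonzero `g : k →ₗ[R] M` from the residue field. A central endomorphism `φ`
that is not surjective satisfies `φ ∘ g = 0`: pick a surjection `f : M → k` vanishing on the
image of `φ`; then `φ ∘ (g ∘ f) = (g ∘ f) ∘ φ = 0`, and `f` can be cancelled. A surjective
endomorphism of a finite module is bijective (Vasconcelos) and the inverse of a central unit is
central, so a non-unit of the centre is not surjective. If `a` and `1 - a` were both non-units,
then `g = a ∘ g + (1 - a) ∘ g = 0`.
-/

open Limits

instance linearYoneda_obj_preservesLimits (A : Type) [CommRing A] (Y : ModuleCat A) :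
    PreservesLimits ((linearYoneda A (ModuleCat A)).obj Y) :=
  have : PreservesLimits ((linearYoneda A (ModuleCat A)).obj Y ⋙ forget _) :=
    inferInstanceAs (PreservesLimits (yoneda.obj Y))
  preservesLimits_of_reflects_of_preserves _ (forget _)

noncomputable def extZeroIsoHom (A : Type) [CommRing A] (X Y : ModuleCat A) :
    ((Ext A (ModuleCat A) 0).obj (Opposite.op X)).obj Y ≅ ModuleCat.of A (X ⟶ Y) :=
  have := preservesFiniteColimits_rightOp ((linearYoneda A (ModuleCat A)).obj Y)
  (((linearYoneda A (ModuleCat A)).obj Y).rightOp.leftDerivedZeroIsoSelf.app X).unop.symm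

theorem exists_ne_zero_of_moduleDepth_eq_zero (R : Type) [CommRing R] [IsLocalRing R]
    (M : Type) [AddCommGroup M] [Module R M] (h : moduleDepth R M = 0) :
    ∃ g : IsLocalRing.ResidueField R →ₗ[R] M, g ≠ 0 := by
  rw [moduleDepth] at h
  obtain ⟨d, hd, -⟩ := sInf_lt_iff.mp (h.trans_lt ENat.top_pos)
  obtain ⟨n, hn, hnt⟩ := h ▸ csInf_mem ⟨d, hd⟩
  obtain rfl : n = 0 := by exact_mod_cast hn.symm
  have := (extZeroIsoHom R (.of R (IsLocalRing.ResidueField R)) (.of R M)).toLinearEquiv.symm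
    |>.toEquiv.nontrivial
  obtain ⟨g, hg⟩ := exists_ne (0 : ModuleCat.of R (IsLocalRing.ResidueField R) ⟶ ModuleCat.of R M)
  exact ⟨g.hom, fun h0 => hg (ModuleCat.hom_ext h0)⟩

theorem Subalgebra.center.isUnit_of_isUnit_coe {R A : Type*} [CommSemiring R] [Semiring A]
    [Algebra R A] (a : Subalgebra.center R A) (ha : IsUnit (a : A)) : IsUnit a := by
  obtain ⟨u, hu⟩ := ha
  have hinv : (↑u⁻¹ : A) ∈ Subalgebra.center R A := Set.units_inv_mem_center (hu ▸ a.2)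
  exact IsUnit.of_mul_eq_one ⟨_, hinv⟩ (Subtype.ext (by simp [← hu]))

variable {R : Type} [CommRing R] {M : Type} [AddCommGroup M] [Module R M] [Module.Finite R M]

theorem Module.End.isUnit_center_of_surjective (a : Subalgebra.center R (Module.End R M))
    (ha : Function.Surjective (a : Module.End R M)) : IsUnit a :=
  Subalgebra.center.isUnit_of_isUnit_coe a <| (Module.End.isUnit_iff _).mpr
    (OrzechProperty.bijective_of_surjective_endomorphism _ ha)

section LocalRing

variable [IsLocalRing R]

theorem Submodule.exists_surjective_residueField_le_ker {N : Submodule R M} (hN : N ≠ ⊤) :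
    ∃ f : M →ₗ[R] IsLocalRing.ResidueField R, Function.Surjective f ∧ N ≤ LinearMap.ker f := by
  obtain ⟨P, hP, hNP⟩ := (eq_top_or_exists_le_coatom N).resolve_left hN
  have : IsSimpleModule R (M ⧸ P) := isSimpleModule_iff_isCoatom.mpr hP
  obtain ⟨I, hI, ⟨e⟩⟩ := isSimpleModule_iff_quot_maximal.mp this
  obtain rfl := IsLocalRing.eq_maximalIdeal hI
  let e : (M ⧸ P) ≃ₗ[R] IsLocalRing.ResidueField R := e
  refine ⟨e.toLinearMap ∘ₗ P.mkQ, e.surjective.comp P.mkQ_surjective, fun x hx => ?_⟩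
  rw [LinearMap.mem_ker, LinearMap.comp_apply, P.mkQ_apply,
    (Submodule.Quotient.mk_eq_zero P).mpr (hNP hx), map_zero]

theorem comp_eq_zero_of_mem_center_of_not_surjective {φ : Module.End R M}
    (hφ : φ ∈ Subalgebra.center R (Module.End R M)) (hs : ¬ Function.Surjective φ)
    (g : IsLocalRing.ResidueField R →ₗ[R] M) : φ ∘ₗ g = 0 := by
  obtain ⟨f, hf, hker⟩ :=
    Submodule.exists_surjective_residueField_le_ker (LinearMap.range_eq_top.not.mpr hs)
  have hfφ : f ∘ₗ φ = 0 := LinearMap.range_le_ker_iff.mp hker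
  have hφgf : φ * (g ∘ₗ f) = 0 := by
    rw [← Subalgebra.mem_center_iff.mp hφ, Module.End.mul_eq_comp, LinearMap.comp_assoc, hfφ,
      LinearMap.comp_zero]
  exact (LinearMap.cancel_right hf).mp hφgf

end LocalRing

theorem center_end_isLocalRing_of_depth_zero_general
    (R : Type) [CommRing R] [IsLocalRing R]
    (M : Type) [AddCommGroup M] [Module R M] [Module.Finite R M]
    (hdepth : moduleDepth R M = 0) :
    IsLocalRing (Subalgebra.center R (Module.End R M)) := by
  obtain ⟨g, hg⟩ := exists_ne_zero_of_moduleDepth_eq_zero R M hdepth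
  obtain ⟨x, hx⟩ := DFunLike.ne_iff.mp hg
  have : Nontrivial M := nontrivial_of_ne _ _ hx
  have kills_g (a : Subalgebra.center R (Module.End R M)) (ha : ¬ IsUnit a) :
      (a : Module.End R M) ∘ₗ g = 0 :=
    comp_eq_zero_of_mem_center_of_not_surjective a.2
      (mt (Module.End.isUnit_center_of_surjective a) ha) g
  refine IsLocalRing.of_isUnit_or_isUnit_one_sub_self fun a => ?_
  by_contra! h
  apply hg
  calc g = ((a + (1 - a) : Subalgebra.center R (Module.End R M)) : Module.End R M) ∘ₗ g := by
        simp [Module.End.one_eq_id]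
    _ = 0 := by
        rw [Subalgebra.coe_add, LinearMap.add_comp, kills_g a h.1, kills_g _ h.2, add_zero]

/-- Let `(R,𝔪)` be a commutative noetherian local ring and `M` a finitely generated
`R`-module with `depth_R M = 0`.  Then the center `Z(End_R M)` is a local ring. -/
theorem center_end_isLocalRing_of_depth_zero
    (R : Type) [CommRing R] [IsNoetherianRing R] [IsLocalRing R]
    (M : Type) [AddCommGroup M] [Module R M] [Module.Finite R M]
    (hdepth : moduleDepth R M = 0) :
    IsLocalRing (Subalgebra.center R (Module.End R M)) :=
  center_end_isLocalRing_of_depth_zero_general R M hdepth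
end

section
/- Let R be a commutative noetherian ring, φ : R → S an R-algebra homomorphism such that S is finitely generated projective as an R-module and Supp_R S = Spec R. Then φ is a split monomorphism of R-modules, and its cokernel is a finitely generated projective R-module. -/
/-- Let `R` be a commutative noetherian ring and `φ : R → S` an `R`-algebra structure
map such that `S` is finitely generated projective as an `R`-module and
`Supp_R S = Spec R`.  Then `φ` is a split monomorphism of `R`-modules and its cokernel
is a finitely generated projective `R`-module. -/
theorem algebraMap_split_mono_of_projective_full_support
    (R : Type) [CommRing R] [IsNoetherianRing R]
    (S : Type) [Ring S] [Algebra R S] [Module.Finite R S] [Module.Projective R S]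
    (hsupp : Module.support R S = Set.univ) :
    (∃ g : S →ₗ[R] R, g ∘ₗ Algebra.linearMap R S = LinearMap.id) ∧
    Module.Finite R (S ⧸ LinearMap.range (Algebra.linearMap R S)) ∧
    Module.Projective R (S ⧸ LinearMap.range (Algebra.linearMap R S)) := by
  -- the ideal of values `g 1` for `g` in the dual module
  set I : Ideal R :=
    LinearMap.range ((LinearMap.applyₗ (1 : S)) : (S →ₗ[R] R) →ₗ[R] R) with hI
  have hItop : I = ⊤ := by
    by_contra hne
    obtain ⟨m, hm, hIm⟩ := Ideal.exists_le_maximal I hne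
    -- dual basis from projectivity
    obtain ⟨s, hs⟩ := (Module.projective_def.mp (inferInstance : Module.Projective R S))
    set c : S →₀ R := s 1 with hc
    have hc1 : (c.sum fun x r => r • x) = 1 := by
      have := hs 1
      rwa [Finsupp.linearCombination_apply] at this
    -- every coefficient of `c` lies in `m`
    have hcm : ∀ x : S, c x ∈ m := by
      intro x
      apply hIm
      exact ⟨(Finsupp.lapply x) ∘ₗ s, rfl⟩
    -- hence `S = m • S`
    have htop : (⊤ : Submodule R S) ≤ m • (⊤ : Submodule R S) := by
      intro t _
      have ht : t = c.sum fun x r => r • (t * x) := by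
        calc t = t * 1 := (mul_one t).symm
        _ = t * c.sum fun x r => r • x := by rw [hc1]
        _ = c.sum fun x r => r • (t * x) := by
            rw [Finsupp.sum, Finsupp.sum, Finset.mul_sum]
            exact Finset.sum_congr rfl fun x _ => (mul_smul_comm _ _ _)
      rw [ht]
      refine Submodule.sum_mem _ fun x _ => ?_
      exact Submodule.smul_mem_smul (hcm x) trivial
    obtain ⟨r, hr1, hr0⟩ :=
      Submodule.exists_sub_one_mem_and_smul_eq_zero_of_fg_of_le_smul m ⊤
        (Module.finite_def.mp inferInstance) htop
    have hrann : r ∈ Module.annihilator R S := by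
      rw [Module.mem_annihilator]
      intro t; exact hr0 t trivial
    have hmem : (⟨m, hm.isPrime⟩ : PrimeSpectrum R) ∈ Module.support R S := by
      rw [hsupp]; trivial
    rw [Module.support_eq_zeroLocus] at hmem
    have hrm : r ∈ m := hmem hrann
    have : (1 : R) ∈ m := by
      have := m.sub_mem hrm hr1
      simpa using this
    exact hm.ne_top (m.eq_top_of_isUnit_mem this isUnit_one)
  -- extract the retraction
  have h1 : (1 : R) ∈ I := hItop ▸ Submodule.mem_top
  obtain ⟨g, hg⟩ := h1
  have hg1 : g 1 = 1 := hg
  have hsplit : g ∘ₗ Algebra.linearMap R S = LinearMap.id := by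
    ext : 1
    simp only [LinearMap.comp_apply, Algebra.linearMap_apply, LinearMap.id_apply,
      Algebra.algebraMap_eq_smul_one, map_smul, hg1, smul_eq_mul, mul_one]
  refine ⟨⟨g, hsplit⟩, ?_, ?_⟩
  · exact Module.Finite.quotient R _
  · -- the cokernel is a direct summand of `S`
    set N := LinearMap.range (Algebra.linearMap R S)
    set p : S →ₗ[R] S := LinearMap.id - (Algebra.linearMap R S) ∘ₗ g with hp
    have hNp : N ≤ LinearMap.ker p := by
      rintro _ ⟨r, rfl⟩
      simp only [LinearMap.mem_ker, hp, LinearMap.sub_apply, LinearMap.id_apply,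
        LinearMap.comp_apply]
      have : g ((Algebra.linearMap R S) r) = r := by
        have := congrArg (fun f => f r) hsplit
        simpa using this
      rw [this, sub_self]
    set σ : (S ⧸ N) →ₗ[R] S := N.liftQ p hNp with hσ
    refine Module.Projective.of_split σ N.mkQ ?_
    ext x
    simp only [LinearMap.comp_apply, LinearMap.id_apply, hσ, Submodule.liftQ_apply,
      Submodule.mkQ_apply, hp, LinearMap.sub_apply, LinearMap.id_apply]
    rw [Submodule.Quotient.eq]
    have : x - (Algebra.linearMap R S) (g x) - x = -((Algebra.linearMap R S) (g x)) := by abel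
    rw [this]
    exact N.neg_mem ⟨g x, rfl⟩
end

section
/- Let R → S be a finite ring homomorphism of commutative noetherian rings, φ : Spec S → Spec R the induced map, and M a finitely generated R-module. Then the set of associated primes of the S-module Hom_R(S, M) equals φ^{-1}(Ass_R M), the set of primes of S lying over associated primes of M. -/
variable (R S M : Type)

/-- The `S`-module structure on `Hom_R(S, M)` given by `(s • f)(x) = f (s * x)`. -/
noncomputable def homSourceModule [CommRing R] [CommRing S] [Algebra R S]
    [AddCommGroup M] [Module R M] : Module S (S →ₗ[R] M) where
  smul s f := f ∘ₗ Algebra.lmul R S s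
  one_smul f := LinearMap.ext fun x => by show f (1 * x) = f x; rw [one_mul]
  mul_smul s t f := LinearMap.ext fun x => by
    show f (s * t * x) = f (t * (s * x)); ring_nf
  smul_zero s := LinearMap.ext fun x => rfl
  smul_add s f g := LinearMap.ext fun x => rfl
  add_smul s t f := LinearMap.ext fun x => by
    show f ((s + t) * x) = f (s * x) + f (t * x); rw [add_mul, map_add]
  zero_smul f := LinearMap.ext fun x => by show f (0 * x) = 0; rw [zero_mul, map_zero]

attribute [local instance] homSourceModule

/-!
A prime `Q` of `S` is associated to `Hom_R(S, M)` when it is the radical of the annihilator of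
some `f : S → M`. Contracted to `R`, that annihilator is the annihilator of the finitely generated
submodule `f(S)` of `M`; as its radical `Q ∩ R` is prime, `Q ∩ R` is the unique minimal prime of
`f(S)`, hence associated to `f(S)` and so to `M`.

Conversely, if `p = Q ∩ R` is associated to `M`, embed `R/p ↪ M` and pick a nonzero
`R/p`-linear functional `g` on `S/Q`, which is finite and torsion-free over the domain `R/p`.
Then `f : S → S/Q → R/p ↪ M` has annihilator exactly `Q`: by integrality a nonzero `c ∈ S/Q`
divides a nonzero element of `R/p`, so `c • g ≠ 0`.
-/

open Submodule in
theorem Module.exists_dual_ne_zero_of_isTorsionFree {A C : Type*} [CommRing A] [IsDomain A]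
    [AddCommGroup C] [Module A C] [Module.Finite A C] [Module.IsTorsionFree A C] [Nontrivial C] :
    ∃ g : Module.Dual A C, g ≠ 0 := by
  classical
  obtain ⟨n, v, hv⟩ := Module.Finite.exists_fin (R := A) (M := C)
  obtain ⟨I, hI, hmax⟩ := exists_maximal_linearIndepOn A v
  let N := span A (Set.range fun i : I => v i)
  -- some nonzero `α` multiplies every generator, hence all of `C`, into the free module `N`
  have hgen : ∀ i, ∃ a : A, a ≠ 0 ∧ a • v i ∈ N := fun i => by
    by_cases hi : i ∈ I
    · exact ⟨1, one_ne_zero, by simpa using subset_span (Set.mem_range_self (⟨i, hi⟩ : I))⟩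
    · simpa [N, Set.image_eq_range] using hmax i hi
  choose a ha haN using hgen
  let α := ∏ i, a i
  have hα : α ≠ 0 := Finset.prod_ne_zero_iff.mpr fun i _ => ha i
  have hαN : ∀ c, α • c ∈ N := by
    suffices LinearMap.range (LinearMap.lsmul A C α) ≤ N from fun c => this ⟨c, rfl⟩
    rw [LinearMap.range_eq_map, ← hv, map_span_le]
    rintro _ ⟨i, rfl⟩
    rw [LinearMap.lsmul_apply, show α = _ from (Finset.prod_erase_mul _ _ (Finset.mem_univ i)).symm,
      mul_smul]
    exact N.smul_mem _ (haN i)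
  obtain ⟨c, hc⟩ := exists_ne (0 : C)
  let b := Module.Basis.span hI
  let y : N := ⟨α • c, hαN c⟩
  have hy : y ≠ 0 := fun h => smul_ne_zero hα hc (congrArg Subtype.val h)
  obtain ⟨i, hi⟩ := Finsupp.ne_iff.mp (b.repr.map_ne_zero_iff.mpr hy)
  exact ⟨b.coord i ∘ₗ LinearMap.codRestrict N (LinearMap.lsmul A C α) hαN,
    fun h => hi (LinearMap.congr_fun h c)⟩

theorem LinearMap.comp_mulLeft_ne_zero {A C : Type*} [CommRing A] [IsDomain A] [CommRing C]
    [IsDomain C] [Algebra A C] [Algebra.IsIntegral A C] {g : Module.Dual A C} (hg : g ≠ 0)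
    {c : C} (hc : c ≠ 0) : g ∘ₗ LinearMap.mulLeft A c ≠ 0 := by
  obtain ⟨a, ha, ha0⟩ := Submodule.exists_mem_ne_zero_of_ne_bot
    (Ideal.comap_ne_bot_of_integral_mem hc (Ideal.mem_span_singleton_self c)
      (Algebra.IsIntegral.isIntegral (R := A) c))
  obtain ⟨d, hd⟩ := Ideal.mem_span_singleton'.mp (Ideal.mem_comap.mp ha)
  obtain ⟨x, hx⟩ := DFunLike.ne_iff.mp hg
  intro h
  have : g (c * (d * x)) = a * g x := by
    rw [← mul_assoc, mul_comm c, hd, ← Algebra.smul_def, map_smul, smul_eq_mul]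
  exact mul_ne_zero ha0 hx (this ▸ LinearMap.congr_fun h (d * x))

theorem mem_associatedPrimes_of_radical_annihilator_eq {A N : Type*} [CommRing A]
    [IsNoetherianRing A] [AddCommGroup N] [Module A N] [Module.Finite A N] {p : Ideal A}
    [p.IsPrime] (h : (Module.annihilator A N).radical = p) : p ∈ associatedPrimes A N :=
  Module.associatedPrimes.minimalPrimes_annihilator_subset_associatedPrimes A N <| by
    rw [← Ideal.radical_minimalPrimes, h, Ideal.minimalPrimes_eq_subsingleton_self]
    rfl

section homSource

variable {R S M} [CommRing R] [CommRing S] [Algebra R S] [AddCommGroup M] [Module R M]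

theorem homSource_mem_colon_bot_singleton_iff {f : S →ₗ[R] M} {s : S} :
    s ∈ (⊥ : Submodule S (S →ₗ[R] M)).colon {f} ↔ f ∘ₗ LinearMap.mulLeft R s = 0 := by
  rw [Submodule.mem_colon_singleton, Submodule.mem_bot]
  rfl

theorem comap_colon_bot_singleton_homSource (f : S →ₗ[R] M) :
    ((⊥ : Submodule S (S →ₗ[R] M)).colon {f}).comap (algebraMap R S) =
      Module.annihilator R (LinearMap.range f) := by
  ext r
  rw [Ideal.mem_comap, homSource_mem_colon_bot_singleton_iff, Module.mem_annihilator]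
  simp [LinearMap.ext_iff, Subtype.ext_iff, ← Algebra.smul_def]

theorem comap_mem_associatedPrimes_of_mem_associatedPrimes_homSource [IsNoetherianRing R]
    [Module.Finite R S] {Q : Ideal S} (hQ : Q ∈ associatedPrimes S (S →ₗ[R] M)) :
    Q.comap (algebraMap R S) ∈ associatedPrimes R M := by
  obtain ⟨hQ, f, rfl⟩ := hQ
  have hp := hQ.comap (algebraMap R S)
  rw [Ideal.comap_radical, comap_colon_bot_singleton_homSource] at hp ⊢
  exact (mem_associatedPrimes_of_radical_annihilator_eq rfl).map_of_injective _
    (LinearMap.range f).injective_subtype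

theorem mem_associatedPrimes_homSource_of_comap_mem [IsNoetherianRing R] [Module.Finite R S]
    {Q : Ideal S} [hQ : Q.IsPrime] (hp : Q.comap (algebraMap R S) ∈ associatedPrimes R M) :
    Q ∈ associatedPrimes S (S →ₗ[R] M) := by
  set p := Q.comap (algebraMap R S)
  obtain ⟨-, ι, hι⟩ := (isAssociatedPrime_iff_exists_injective_linearMap p M).mp hp
  have : Module.IsTorsionFree (R ⧸ p) (S ⧸ Q) :=
    Module.isTorsionFree_iff_algebraMap_injective.mpr Ideal.algebraMap_quotient_injective
  obtain ⟨g, hg⟩ := Module.exists_dual_ne_zero_of_isTorsionFree (A := R ⧸ p) (C := S ⧸ Q)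
  let f : S →ₗ[R] M := ι ∘ₗ g.restrictScalars R ∘ₗ (Ideal.Quotient.mkₐ R Q).toLinearMap
  refine ⟨hQ, f, ?_⟩
  suffices (⊥ : Submodule S (S →ₗ[R] M)).colon {f} = Q by rw [this, hQ.radical]
  ext s
  have hf : f ∘ₗ LinearMap.mulLeft R s = 0 ↔
      g ∘ₗ LinearMap.mulLeft (R ⧸ p) (Ideal.Quotient.mk Q s) = 0 := by
    simp only [LinearMap.ext_iff, Ideal.Quotient.mk_surjective.forall]
    simp [f, map_eq_zero_iff ι hι]
  rw [homSource_mem_colon_bot_singleton_iff, hf, ← Ideal.Quotient.eq_zero_iff_mem]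
  exact ⟨not_imp_not.mp (LinearMap.comp_mulLeft_ne_zero hg), fun h => by simp [h]⟩

end homSource

theorem associatedPrimes_hom_finite
    [CommRing R] [IsNoetherianRing R] [CommRing S]
    [Algebra R S] [Module.Finite R S]
    [AddCommGroup M] [Module R M] :
    associatedPrimes S (S →ₗ[R] M) =
      {Q : Ideal S | Q.IsPrime ∧ Q.comap (algebraMap R S) ∈ associatedPrimes R M} :=
  Set.ext fun _ =>
    ⟨fun hQ => ⟨hQ.isPrime, comap_mem_associatedPrimes_of_mem_associatedPrimes_homSource hQ⟩,
      fun ⟨_, hp⟩ => mem_associatedPrimes_homSource_of_comap_mem hp⟩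
end

section
/- Let R be a commutative noetherian ring, 𝔭 a prime ideal, M a finitely generated R-module with M_𝔭 ≠ 0 and depth_{R_𝔭} M_𝔭 ≥ 1. Then there exists a submodule N ⊆ M such that depth_{R_𝔭} N_𝔭 = 1, N_𝔮 ≅ M_𝔮 for all primes 𝔮 not containing 𝔭, and depth_{R_𝔮} N_𝔮 ≥ min{2, depth_{R_𝔮} M_𝔮} for all primes 𝔮 strictly containing 𝔭. -/
/-!
Take `N = ker (M → M_𝔭 / 𝔭 M_𝔭)` and `Y = M ⧸ N`. Since `𝔭` kills `Y` and every `t ∉ 𝔭` is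
`Y`-regular, `Y_𝔮 = 0` when `𝔭 ⊄ 𝔮`, `Hom(κ(𝔮), Y_𝔮) = 0` when `𝔮 ⊋ 𝔭` (use `t ∈ 𝔮 \ 𝔭`), and
`Y_𝔭` is a nonzero `κ(𝔭)`-vector space by Nakayama. The long exact `Ext(κ, -)` sequence of
`0 → N_𝔮 → M_𝔮 → Y_𝔮 → 0` then does the rest: at `𝔭`, `Hom(κ, N_𝔭) ⊆ Hom(κ, M_𝔭) = 0` while
`Hom(κ, Y_𝔭) ≠ 0` injects into `Ext¹(κ, N_𝔭)`; at `𝔮 ⊋ 𝔭`, `Extⁱ(κ, N_𝔮) ↪ Extⁱ(κ, M_𝔮)`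
for `i = 0, 1`.
-/

open CategoryTheory

open Limits Opposite IsLocalRing

section Ext

variable {A : Type*} [CommRing A]

noncomputable instance (Y : ModuleCat A) :
    PreservesLimits ((linearYoneda A (ModuleCat A)).obj Y) :=
  have : PreservesLimits ((linearYoneda A (ModuleCat A)).obj Y ⋙ forget _) :=
    (inferInstance : PreservesLimits (yoneda.obj Y))
  preservesLimits_of_reflects_of_preserves _ (forget _)

noncomputable instance (Y : ModuleCat A) :
    PreservesFiniteColimits ((linearYoneda A (ModuleCat A)).obj Y).rightOp :=
  preservesFiniteColimits_rightOp _

lemma isZero_ext_zero_iff (X Y : ModuleCat A) :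
    IsZero (((Ext A (ModuleCat A) 0).obj (op X)).obj Y) ↔ Subsingleton (X →ₗ[A] Y) := by
  have e : ((Ext A (ModuleCat A) 0).obj (op X)).obj Y ≅ ModuleCat.of A (X ⟶ Y) :=
    ((((linearYoneda A (ModuleCat A)).obj Y).rightOp.leftDerivedZeroIsoSelf).app X).unop.symm
  rw [e.isZero_iff, ModuleCat.isZero_iff_subsingleton]
  exact ModuleCat.homEquiv.subsingleton_congr

namespace CategoryTheory.ProjectiveResolution

variable {X : ModuleCat A} (P : ProjectiveResolution X)

noncomputable def linearYonedaObjMap {Y Y' : ModuleCat A} (f : Y ⟶ Y') :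
    P.complex.linearYonedaObj A Y ⟶ P.complex.linearYonedaObj A Y' where
  f i := ((linearYoneda A (ModuleCat A)).map f).app (op (P.complex.X i))
  comm' i j _ := by
    ext φ
    exact (Category.assoc (P.complex.d j i) (φ : P.complex.X i ⟶ Y) f).symm

noncomputable def linearYonedaObjShortComplex (S : ShortComplex (ModuleCat A)) :
    ShortComplex (CochainComplex (ModuleCat A) ℕ) :=
  ShortComplex.mk (P.linearYonedaObjMap S.f) (P.linearYonedaObjMap S.g) (by
    ext i φ
    change ((φ : P.complex.X i ⟶ S.X₁) ≫ S.f) ≫ S.g = 0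
    exact (Category.assoc _ _ _).trans ((congrArg _ S.zero).trans comp_zero))

lemma shortExact_linearYonedaObjShortComplex {S : ShortComplex (ModuleCat A)}
    (hS : S.ShortExact) : (P.linearYonedaObjShortComplex S).ShortExact := by
  rw [HomologicalComplex.shortExact_iff_degreewise_shortExact]
  intro i
  have := hS.mono_f
  refine ShortComplex.ShortExact.mk' ?_ ?_ ?_
  · rw [ShortComplex.moduleCat_exact_iff]
    intro (φ : P.complex.X i ⟶ S.X₂) (hφ : φ ≫ S.g = 0)
    exact ⟨hS.exact.lift φ hφ, hS.exact.lift_f φ hφ⟩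
  · rw [ModuleCat.mono_iff_injective]
    intro (φ : P.complex.X i ⟶ S.X₁) ψ (h : φ ≫ S.f = ψ ≫ S.f)
    exact (cancel_mono S.f).mp h
  · rw [ModuleCat.epi_iff_surjective]
    intro (φ : P.complex.X i ⟶ S.X₃)
    have := hS.epi_g
    have := P.projective i
    exact ⟨Projective.factorThru φ S.g, Projective.factorThru_comp φ S.g⟩

end CategoryTheory.ProjectiveResolution

namespace CategoryTheory.ShortComplex.ShortExact

variable {S : ShortComplex (ModuleCat A)} (X : ModuleCat A) (n : ℕ)

lemma isZero_ext_succ_X₁ (hS : S.ShortExact)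
    (h₃ : IsZero (((Ext A (ModuleCat A) n).obj (Opposite.op X)).obj S.X₃))
    (h₂ : IsZero (((Ext A (ModuleCat A) (n + 1)).obj (Opposite.op X)).obj S.X₂)) :
    IsZero (((Ext A (ModuleCat A) (n + 1)).obj (Opposite.op X)).obj S.X₁) := by
  let P := projectiveResolution X
  refine IsZero.of_iso ?_ (P.isoExt (n + 1) S.X₁)
  exact ((P.shortExact_linearYonedaObjShortComplex hS).homology_exact₁ n (n + 1) rfl).isZero_X₂
    ((h₃.of_iso (P.isoExt n S.X₃).symm).eq_of_src _ _)
    ((h₂.of_iso (P.isoExt (n + 1) S.X₂).symm).eq_of_tgt _ _)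

lemma isZero_ext_X₃ (hS : S.ShortExact)
    (h₂ : IsZero (((Ext A (ModuleCat A) n).obj (Opposite.op X)).obj S.X₂))
    (h₁ : IsZero (((Ext A (ModuleCat A) (n + 1)).obj (Opposite.op X)).obj S.X₁)) :
    IsZero (((Ext A (ModuleCat A) n).obj (Opposite.op X)).obj S.X₃) := by
  let P := projectiveResolution X
  refine IsZero.of_iso ?_ (P.isoExt n S.X₃)
  exact ((P.shortExact_linearYonedaObjShortComplex hS).homology_exact₃ n (n + 1) rfl).isZero_X₂
    ((h₂.of_iso (P.isoExt n S.X₂).symm).eq_of_src _ _)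
    ((h₁.of_iso (P.isoExt (n + 1) S.X₁).symm).eq_of_tgt _ _)

end CategoryTheory.ShortComplex.ShortExact

end Ext

section Depth

variable {A : Type} [CommRing A] [IsLocalRing A]
  {M : Type} [AddCommGroup M] [Module A M] {N : Type} [AddCommGroup N] [Module A N]

lemma moduleDepth_le (n : ℕ) (h : ¬ IsZero (((Ext A (ModuleCat A) n).obj
      (op (ModuleCat.of A (ResidueField A)))).obj (ModuleCat.of A M))) :
    moduleDepth A M ≤ n :=
  sInf_le ⟨n, rfl, by rwa [ModuleCat.isZero_iff_subsingleton, not_subsingleton_iff_nontrivial] at h⟩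

lemma le_moduleDepth_iff (k : ℕ) :
    k ≤ moduleDepth A M ↔ ∀ i < k, IsZero (((Ext A (ModuleCat A) i).obj
      (op (ModuleCat.of A (ResidueField A)))).obj (ModuleCat.of A M)) := by
  refine ⟨fun hk i hi => ?_, fun h => le_sInf ?_⟩
  · by_contra hM
    exact absurd ((moduleDepth_le i hM).trans_lt ((Nat.cast_lt.mpr hi).trans_le hk)) (lt_irrefl _)
  · rintro _ ⟨n, rfl, hn⟩
    by_contra! hnk
    rw [← not_subsingleton_iff_nontrivial, ← ModuleCat.isZero_iff_subsingleton] at hn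
    exact hn (h n (by exact_mod_cast hnk))

lemma min_moduleDepth_le (k : ℕ)
    (h : ∀ i < k,
      IsZero (((Ext A (ModuleCat A) i).obj
        (op (ModuleCat.of A (ResidueField A)))).obj (ModuleCat.of A M)) →
      IsZero (((Ext A (ModuleCat A) i).obj
        (op (ModuleCat.of A (ResidueField A)))).obj (ModuleCat.of A N))) :
    min (k : ℕ∞) (moduleDepth A M) ≤ moduleDepth A N := by
  obtain ⟨j, hj⟩ : ∃ j : ℕ, (j : ℕ∞) = min (k : ℕ∞) (moduleDepth A M) :=
    ENat.ne_top_iff_exists.mp (ne_top_of_le_ne_top (ENat.natCast_ne_top k) (min_le_left _ _))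
  have hjk : j ≤ k := by exact_mod_cast hj ▸ min_le_left _ _
  have hjM := (le_moduleDepth_iff j).mp (hj ▸ min_le_right _ _)
  rw [← hj, le_moduleDepth_iff]
  exact fun i hi => h i (hi.trans_le hjk) (hjM i hi)

variable {Y : Type} [AddCommGroup Y] [Module A Y] {f : N →ₗ[A] M} {g : M →ₗ[A] Y}

lemma moduleDepth_eq_one_of_exact (hf : Function.Injective f) (hfg : Function.Exact f g)
    (hg : Function.Surjective g) (hM : 1 ≤ moduleDepth A M)
    (hY : Nontrivial (ResidueField A →ₗ[A] Y)) :
    moduleDepth A N = 1 := by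
  let S := ModuleCat.shortComplexOfCompEqZero f g hfg.linearMap_comp_eq_zero
  have hS : S.ShortExact := ModuleCat.shortComplex_shortExact S hfg hf hg
  have hM₀ := (le_moduleDepth_iff 1).mp hM 0 one_pos
  refine le_antisymm (moduleDepth_le 1 fun hN₁ => ?_) ((le_moduleDepth_iff 1).mpr fun i hi => ?_)
  · exact not_subsingleton_iff_nontrivial.mpr hY
      ((isZero_ext_zero_iff _ _).mp (hS.isZero_ext_X₃ _ 0 hM₀ hN₁))
  · obtain rfl : i = 0 := Nat.lt_one_iff.mp hi
    rw [isZero_ext_zero_iff] at hM₀ ⊢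
    exact ⟨fun φ ψ => (LinearMap.cancel_left hf).mp (Subsingleton.elim _ _)⟩

lemma min_two_moduleDepth_le_of_exact (hf : Function.Injective f) (hfg : Function.Exact f g)
    (hg : Function.Surjective g) (hY : Subsingleton (ResidueField A →ₗ[A] Y)) :
    min 2 (moduleDepth A M) ≤ moduleDepth A N := by
  let S := ModuleCat.shortComplexOfCompEqZero f g hfg.linearMap_comp_eq_zero
  have hS : S.ShortExact := ModuleCat.shortComplex_shortExact S hfg hf hg
  refine min_moduleDepth_le 2 fun i hi hM => ?_
  interval_cases i
  · rw [isZero_ext_zero_iff] at hM ⊢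
    exact ⟨fun φ ψ => (LinearMap.cancel_left hf).mp (Subsingleton.elim _ _)⟩
  · exact hS.isZero_ext_succ_X₁ _ 0 ((isZero_ext_zero_iff _ _).mpr hY) hM

end Depth

section ResidueFieldHom

variable {A : Type*} [CommRing A] [IsLocalRing A] {Z : Type*} [AddCommGroup Z] [Module A Z]

lemma nontrivial_residueField_linearMap_of_le_annihilator [Nontrivial Z]
    (h : maximalIdeal A ≤ Module.annihilator A Z) :
    Nontrivial (ResidueField A →ₗ[A] Z) := by
  obtain ⟨z, hz⟩ := exists_ne (0 : Z)
  have hker : maximalIdeal A ≤ LinearMap.ker (LinearMap.toSpanSingleton A Z z) :=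
    fun a ha => Module.mem_annihilator.mp (h ha) z
  refine nontrivial_of_ne ((maximalIdeal A).liftQ _ hker : ResidueField A →ₗ[A] Z) 0 fun h0 => ?_
  have h1 := LinearMap.congr_fun h0 (Submodule.Quotient.mk 1)
  rw [Submodule.liftQ_apply, LinearMap.toSpanSingleton_apply, one_smul] at h1
  exact hz h1

lemma subsingleton_residueField_linearMap_of_isSMulRegular {t : A} (ht : t ∈ maximalIdeal A)
    (hreg : IsSMulRegular Z t) :
    Subsingleton (ResidueField A →ₗ[A] Z) := by
  refine subsingleton_of_forall_eq 0 fun φ => LinearMap.ext fun x => hreg.right_eq_zero_of_smul ?_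
  rw [← map_smul, Algebra.smul_def, ResidueField.algebraMap_eq, (residue_eq_zero_iff t).mpr ht,
    zero_mul, map_zero]

end ResidueFieldHom

lemma LocalizedModule.map_subtype_surjective_of_smul_mem {R : Type*} [CommRing R]
    {S : Submonoid R} {M : Type*} [AddCommGroup M] [Module R M] {N : Submodule R M}
    {s : R} (hs : s ∈ S) (h : ∀ m : M, s • m ∈ N) :
    Function.Surjective (LocalizedModule.map S N.subtype) := by
  intro z
  induction z using LocalizedModule.induction_on with
  | h m t =>
    refine ⟨LocalizedModule.mk ⟨s • m, h m⟩ (⟨s, hs⟩ * t), ?_⟩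
    rw [LocalizedModule.map_mk]
    exact LocalizedModule.mk_cancel_common_left (⟨s, hs⟩ : S) t m

section FiberKernel

variable {R : Type*} [CommRing R] (p : Ideal R) [p.IsPrime]
  (M : Type*) [AddCommGroup M] [Module R M]

/-- The kernel `N` of `M → M_𝔭 / 𝔭 M_𝔭`; `M ⧸ N` embeds in a `κ(𝔭)`-vector space, so its only
associated prime is `𝔭`. -/
noncomputable def fiberKernel : Submodule R M :=
  ((maximalIdeal (Localization.AtPrime p) • ⊤ :
    Submodule (Localization.AtPrime p) (LocalizedModule p.primeCompl M)).restrictScalars R).comap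
    (LocalizedModule.mkLinearMap p.primeCompl M)

variable {p M}

lemma smul_mem_fiberKernel {a : R} (ha : a ∈ p) (m : M) : a • m ∈ fiberKernel p M := by
  rw [fiberKernel, Submodule.mem_comap, map_smul, Submodule.restrictScalars_mem,
    ← algebraMap_smul (Localization.AtPrime p) a]
  exact Submodule.smul_mem_smul ((IsLocalization.AtPrime.to_map_mem_maximal_iff _ p a).mpr ha)
    Submodule.mem_top

lemma smul_mem_fiberKernel_iff {t : R} (ht : t ∉ p) {m : M} :
    t • m ∈ fiberKernel p M ↔ m ∈ fiberKernel p M := by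
  rw [fiberKernel, Submodule.mem_comap, Submodule.mem_comap, map_smul,
    Submodule.restrictScalars_mem, Submodule.restrictScalars_mem,
    ← algebraMap_smul (Localization.AtPrime p) t]
  exact Submodule.smul_mem_iff_of_isUnit _ ((IsLocalization.AtPrime.isUnit_to_map_iff _ p t).mpr ht)

lemma isSMulRegular_quotient_fiberKernel {t : R} (ht : t ∉ p) :
    IsSMulRegular (M ⧸ fiberKernel p M) t := by
  refine IsSMulRegular.of_right_eq_zero_of_smul fun y hy => ?_
  obtain ⟨m, rfl⟩ := Submodule.mkQ_surjective _ y
  rw [Submodule.mkQ_apply, ← Submodule.Quotient.mk_smul, Submodule.Quotient.mk_eq_zero,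
    smul_mem_fiberKernel_iff ht] at hy
  exact (Submodule.Quotient.mk_eq_zero _).mpr hy

-- Nakayama: `𝔭 M_𝔭 ≠ M_𝔭`.
lemma fiberKernel_ne_top [Module.Finite R M] [Nontrivial (LocalizedModule p.primeCompl M)] :
    fiberKernel p M ≠ ⊤ := by
  refine fun h => Submodule.top_ne_ideal_smul_of_le_jacobson_annihilator
    (maximalIdeal_le_jacobson
      (Module.annihilator (Localization.AtPrime p) (LocalizedModule p.primeCompl M)))
    (eq_top_iff.mpr fun x _ => ?_).symm
  induction x using LocalizedModule.induction_on with
  | h m s =>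
    have hm : m ∈ fiberKernel p M := h ▸ Submodule.mem_top
    rw [← Submodule.smul_mem_iff_of_isUnit _
      ((IsLocalization.AtPrime.isUnit_to_map_iff _ p s).mpr s.2), algebraMap_smul,
      LocalizedModule.smul'_mk, ← Submonoid.smul_def, LocalizedModule.mk_cancel]
    exact hm

lemma nontrivial_localizedModule_quotient_fiberKernel [Module.Finite R M]
    [Nontrivial (LocalizedModule p.primeCompl M)] :
    Nontrivial (LocalizedModule p.primeCompl (M ⧸ fiberKernel p M)) := by
  obtain ⟨m, -, hm⟩ :=
    SetLike.exists_of_lt (lt_top_iff_ne_top.mpr (fiberKernel_ne_top (p := p) (M := M)))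
  refine nontrivial_of_ne (LocalizedModule.mkLinearMap _ _ (Submodule.Quotient.mk m)) 0
    fun h => hm ?_
  obtain ⟨t, ht, htm⟩ := LocalizedModule.mem_ker_mkLinearMap_iff.mp h
  exact (Submodule.Quotient.mk_eq_zero _).mp
    ((isSMulRegular_quotient_fiberKernel ht).right_eq_zero_of_smul htm)

lemma maximalIdeal_le_annihilator_localizedModule_quotient_fiberKernel :
    maximalIdeal (Localization.AtPrime p) ≤ Module.annihilator (Localization.AtPrime p)
      (LocalizedModule p.primeCompl (M ⧸ fiberKernel p M)) := by
  rw [← Localization.AtPrime.map_eq_maximalIdeal, Ideal.map_le_iff_le_comap]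
  refine fun a ha => Module.mem_annihilator.mpr fun z => ?_
  rw [algebraMap_smul]
  induction z using LocalizedModule.induction_on with
  | h y s =>
    obtain ⟨m, rfl⟩ := Submodule.mkQ_surjective _ y
    rw [LocalizedModule.smul'_mk, Submodule.mkQ_apply, ← Submodule.Quotient.mk_smul,
      (Submodule.Quotient.mk_eq_zero _).mpr (smul_mem_fiberKernel ha m), LocalizedModule.zero_mk]

end FiberKernel

theorem exists_submodule_depth_one_general
    (R : Type) [CommRing R]
    (M : Type) [AddCommGroup M] [Module R M] [Module.Finite R M]
    (p : Ideal R) [p.IsPrime]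
    (hsupp : Nontrivial (LocalizedModule p.primeCompl M))
    (hdepth : 1 ≤ moduleDepth (Localization.AtPrime p) (LocalizedModule p.primeCompl M)) :
    ∃ N : Submodule R M,
      moduleDepth (Localization.AtPrime p) (LocalizedModule p.primeCompl N) = 1 ∧
      (∀ (q : Ideal R) (_ : q.IsPrime), ¬ p ≤ q →
        Function.Bijective (IsLocalizedModule.map q.primeCompl
          (LocalizedModule.mkLinearMap q.primeCompl N)
          (LocalizedModule.mkLinearMap q.primeCompl M) N.subtype)) ∧
      (∀ (q : Ideal R) (_ : q.IsPrime), p < q →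
        min 2 (moduleDepth (Localization.AtPrime q) (LocalizedModule q.primeCompl M)) ≤
          moduleDepth (Localization.AtPrime q) (LocalizedModule q.primeCompl N)) := by
  set N := fiberKernel p M
  have hf (q : Ideal R) [q.IsPrime] :=
    LocalizedModule.map_injective q.primeCompl _ N.injective_subtype
  have hfg (q : Ideal R) [q.IsPrime] : Function.Exact (LocalizedModule.map q.primeCompl N.subtype)
      (LocalizedModule.map q.primeCompl N.mkQ) :=
    LocalizedModule.map_exact q.primeCompl _ _ (LinearMap.exact_subtype_mkQ N)
  have hg (q : Ideal R) [q.IsPrime] :=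
    LocalizedModule.map_surjective q.primeCompl _ N.mkQ_surjective
  have := nontrivial_localizedModule_quotient_fiberKernel (p := p) (M := M)
  refine ⟨N, moduleDepth_eq_one_of_exact (hf p) (hfg p) (hg p) hdepth
    (nontrivial_residueField_linearMap_of_le_annihilator
      maximalIdeal_le_annihilator_localizedModule_quotient_fiberKernel), ?_, ?_⟩
  · intro q _ hpq
    obtain ⟨t, htp, htq⟩ := Set.not_subset.mp hpq
    rw [IsLocalizedModule.map_bijective_iff_localizedModuleMap_bijective]
    exact ⟨hf q, LocalizedModule.map_subtype_surjective_of_smul_mem htq (smul_mem_fiberKernel htp)⟩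
  · intro q _ hpq
    obtain ⟨t, htq, htp⟩ := SetLike.exists_of_lt hpq
    exact min_two_moduleDepth_le_of_exact (hf q) (hfg q) (hg q)
      (subsingleton_residueField_linearMap_of_isSMulRegular
        ((IsLocalization.AtPrime.to_map_mem_maximal_iff _ q t).mpr htq)
        ((isSMulRegular_quotient_fiberKernel htp).of_isLocalizedModule _ q.primeCompl
          (LocalizedModule.mkLinearMap q.primeCompl _)))

/-- Let `R` be a commutative noetherian ring, `𝔭` a prime, `M` a finitely generated
`R`-module with `M_𝔭 ≠ 0` and `depth_{R_𝔭} M_𝔭 ≥ 1`.  Then there is a submodule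
`N ⊆ M` with `depth_{R_𝔭} N_𝔭 = 1`, with `N_𝔮 ≅ M_𝔮` (via the localized inclusion)
for all primes `𝔮` not containing `𝔭`, and with
`depth_{R_𝔮} N_𝔮 ≥ min {2, depth_{R_𝔮} M_𝔮}` for all primes `𝔮 ⊋ 𝔭`. -/
theorem exists_submodule_depth_one
    (R : Type) [CommRing R] [IsNoetherianRing R]
    (M : Type) [AddCommGroup M] [Module R M] [Module.Finite R M]
    (p : Ideal R) [p.IsPrime]
    (hsupp : Nontrivial (LocalizedModule p.primeCompl M))
    (hdepth : 1 ≤ moduleDepth (Localization.AtPrime p) (LocalizedModule p.primeCompl M)) :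
    ∃ N : Submodule R M,
      moduleDepth (Localization.AtPrime p) (LocalizedModule p.primeCompl N) = 1 ∧
      (∀ (q : Ideal R) (_ : q.IsPrime), ¬ p ≤ q →
        Function.Bijective (IsLocalizedModule.map q.primeCompl
          (LocalizedModule.mkLinearMap q.primeCompl N)
          (LocalizedModule.mkLinearMap q.primeCompl M) N.subtype)) ∧
      (∀ (q : Ideal R) (_ : q.IsPrime), p < q →
        min 2 (moduleDepth (Localization.AtPrime q) (LocalizedModule q.primeCompl M)) ≤
          moduleDepth (Localization.AtPrime q) (LocalizedModule q.primeCompl N)) :=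
  exists_submodule_depth_one_general R M p hsupp hdepth
end

section
/- Let R be a commutative noetherian ring, S a multiplicatively closed subset, and X a full subcategory of finitely generated R-modules closed under kernels of arbitrary morphisms between its objects. Then the subcategory X_S := { M_S : M ∈ X } of finitely generated R_S-modules is closed under kernels: for any M, N ∈ X and any R_S-linear map f : M_S → N_S, the kernel of f is isomorphic to L_S for some L ∈ X. -/
/-!
As `R` is noetherian, `M` is finitely presented, so `f = s⁻¹ g_S` for some `R`-linear
`g : M → N` and `s ∈ S`. Since `s` acts invertibly on `N_S`, `ker f = ker g_S`, and as
localization is exact this is `(ker g)_S`, where `ker g ∈ X`.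
-/

open LinearMap

namespace IsLocalizedModule

variable {R : Type*} [CommRing R] (S : Submonoid R)
  {M N M' N' : Type*} [AddCommGroup M] [Module R M] [AddCommGroup N] [Module R N]
  [AddCommGroup M'] [Module R M'] [AddCommGroup N'] [Module R N']
  (fM : M →ₗ[R] M') (fN : N →ₗ[R] N') [IsLocalizedModule S fM] [IsLocalizedModule S fN]

include fN in
lemma ker_smul {P : Type*} [AddCommGroup P] [Module R P] (s : S) (φ : P →ₗ[R] N') :
    ker (s • φ) = ker φ := by
  ext x
  have hs := ((Module.End.isUnit_iff _).mp (map_units fN s)).injective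
  simpa [Submonoid.smul_def] using hs.eq_iff (a := φ x) (b := 0)

lemma _root_.Module.FinitePresentation.exists_map_eq_smul_of_isLocalizedModule
    [Module.FinitePresentation R M] (φ : M' →ₗ[R] N') :
    ∃ (g : M →ₗ[R] N) (s : S), map S fM fN g = s • φ := by
  obtain ⟨g, s, hg⟩ := Module.FinitePresentation.exists_lift_of_isLocalizedModule S fN (φ ∘ₗ fM)
  refine ⟨g, s, linearMap_ext S fM fN ?_⟩
  rw [map_comp, hg, smul_comp]

lemma exists_ker_map_eq [Module.FinitePresentation R M] (φ : M' →ₗ[R] N') :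
    ∃ g : M →ₗ[R] N, ker (map S fM fN g) = ker φ := by
  obtain ⟨g, s, hg⟩ := Module.FinitePresentation.exists_map_eq_smul_of_isLocalizedModule S fM fN φ
  exact ⟨g, hg ▸ ker_smul S fN s φ⟩

include fM fN in
lemma exists_ker_equiv_localizedModule_ker [Module (Localization S) M']
    [IsScalarTower R (Localization S) M'] [Module (Localization S) N']
    [IsScalarTower R (Localization S) N'] [Module.FinitePresentation R M]
    (f : M' →ₗ[Localization S] N') :
    ∃ g : M →ₗ[R] N, Nonempty (ker f ≃ₗ[Localization S] LocalizedModule S (ker g)) := by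
  obtain ⟨g, hg⟩ := exists_ker_map_eq S fM fN (f.restrictScalars R)
  have := toKerLocalized_isLocalizedModule (Localization S) S fM fN g
  have e : LocalizedModule S (ker g) ≃ₗ[R] ker f :=
    (iso S (toKerIsLocalized S fM fN g)).trans <|
      (LinearEquiv.ofEq _ _ (hg.trans (ker_restrictScalars R f))).trans <|
        ((ker f).restrictScalarsEquiv R).restrictScalars R
  exact ⟨g, ⟨e.symm.extendScalarsOfIsLocalization S (Localization S)⟩⟩

end IsLocalizedModule

theorem localized_subcategory_closed_under_kernels_general
    (R : Type) [CommRing R] [IsNoetherianRing R] (S : Submonoid R)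
    (X : ∀ (M : Type) [AddCommGroup M] [Module R M], Prop)
    (hX_fg : ∀ (M : Type) [AddCommGroup M] [Module R M], X M → Module.Finite R M)
    (hX_ker : ∀ (M N : Type) [AddCommGroup M] [Module R M] [AddCommGroup N] [Module R N]
      (f : M →ₗ[R] N), X M → X N → X (LinearMap.ker f))
    (M N : Type) [AddCommGroup M] [Module R M] [AddCommGroup N] [Module R N]
    (hM : X M) (hN : X N)
    (f : LocalizedModule S M →ₗ[Localization S] LocalizedModule S N) :
    ∃ (L : Type) (_ : AddCommGroup L) (_ : Module R L), X L ∧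
      Nonempty ((LinearMap.ker f) ≃ₗ[Localization S] LocalizedModule S L) := by
  have : Module.Finite R M := hX_fg M hM
  have : Module.FinitePresentation R M := Module.finitePresentation_of_finite R M
  obtain ⟨g, e⟩ := IsLocalizedModule.exists_ker_equiv_localizedModule_ker S
    (LocalizedModule.mkLinearMap S M) (LocalizedModule.mkLinearMap S N) f
  exact ⟨ker g, inferInstance, inferInstance, hX_ker M N g hM hN, e⟩

/-- Let `R` be a commutative noetherian ring, `S` a multiplicatively closed subset, and
`X` an isomorphism-closed collection of finitely generated `R`-modules closed under
kernels of morphisms between its objects.  Then the localized subcategory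
`X_S = { M_S : M ∈ X }` is closed under kernels: for `M, N ∈ X` and any
`R_S`-linear `f : M_S → N_S`, the kernel of `f` is isomorphic to `L_S` for some
`L ∈ X`. -/
theorem localized_subcategory_closed_under_kernels
    (R : Type) [CommRing R] [IsNoetherianRing R] (S : Submonoid R)
    (X : ∀ (M : Type) [AddCommGroup M] [Module R M], Prop)
    (hX_fg : ∀ (M : Type) [AddCommGroup M] [Module R M], X M → Module.Finite R M)
    (hX_iso : ∀ (M N : Type) [AddCommGroup M] [Module R M] [AddCommGroup N] [Module R N],
      X M → Nonempty (M ≃ₗ[R] N) → X N)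
    (hX_ker : ∀ (M N : Type) [AddCommGroup M] [Module R M] [AddCommGroup N] [Module R N]
      (f : M →ₗ[R] N), X M → X N → X (LinearMap.ker f))
    (M N : Type) [AddCommGroup M] [Module R M] [AddCommGroup N] [Module R N]
    (hM : X M) (hN : X N)
    (f : LocalizedModule S M →ₗ[Localization S] LocalizedModule S N) :
    ∃ (L : Type) (_ : AddCommGroup L) (_ : Module R L), X L ∧
      Nonempty ((LinearMap.ker f) ≃ₗ[Localization S] LocalizedModule S L) :=
  localized_subcategory_closed_under_kernels_general R S X hX_fg hX_ker M N hM hN f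
end
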